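/- Consider the three-species system with emission size ℓ = 3: u̇₁ = 4u₂²/M, u̇₂ = −8u₂²/M, u̇₃ = −(6u₁u₃ + 12u₂u₃ + 9u₃²)/M, where M = 4u₂² + 6u₁u₃ + 12u₂u₃ + 9u₃², with initial conditions u₁(0) = p, u₂(0) = q, u₃(0) = r where p, q, r > 0 and p + q + r = 1. Then the unique solution satisfies u₂(t) > 0 and u₃(t) > 0 for every t ∈ [0, t_ex); that is, dimers and trimers exhaust simultaneously at the exhaustion time. -/

import Mathlib

/-!
Each of `u₂`, `u₃` solves a linear equation `ḟ = c f`, with coefficient `-8u₂/M`, resp.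
`-(6u₁ + 12u₂ + 9u₃)/M`, continuous as long as `M > 0`. If `f` vanished at some time, backward
uniqueness for this equation (Lipschitz in `f` on compact time intervals) would force `f ≡ 0`
before that time, contradicting `f(0) > 0`.
-/

open Set

theorem ne_zero_of_hasDerivWithinAt_smul_self {E : Type*} [NormedAddCommGroup E]
    [NormedSpace ℝ E] {f : ℝ → E} {c : ℝ → ℝ} {a b : ℝ} (hc : ContinuousOn c (Ico a b))
    (hf : ∀ t ∈ Ico a b, HasDerivWithinAt f (c t • f t) (Ico a b) t) (ha : f a ≠ 0) :
    ∀ t ∈ Ico a b, f t ≠ 0 := by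
  intro t ht hft
  have hsub : Icc a t ⊆ Ico a b := Icc_subset_Ico_right ht.2
  obtain ⟨C, hC⟩ := isCompact_Icc.exists_bound_of_continuousOn (hc.mono hsub)
  have hlip : ∀ τ ∈ Ioc a t, LipschitzOnWith C.toNNReal (fun x : E => c τ • x) univ := by
    intro τ hτ
    refine ((lipschitzWith_smul (c τ)).weaken ?_).lipschitzOnWith
    rw [← NNReal.coe_le_coe, coe_nnnorm, Real.coe_toNNReal']
    exact (hC τ (Ioc_subset_Icc_self hτ)).trans (le_max_left _ _)
  have hderiv : ∀ τ ∈ Ioc a t, HasDerivWithinAt f (c τ • f τ) (Iic τ) τ := by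
    intro τ hτ
    refine (hf τ (hsub (Ioc_subset_Icc_self hτ))).mono_of_mem_nhdsWithin ?_
    exact mem_nhdsWithin_of_mem_nhds <| Filter.mem_of_superset
      (Ioo_mem_nhds hτ.1 (hτ.2.trans_lt ht.2)) Ioo_subset_Ico_self
  have hzero : EqOn f (fun _ => 0) (Icc a t) :=
    ODE_solution_unique_of_mem_Icc_left hlip
      ((HasDerivWithinAt.continuousOn hf).mono hsub) hderiv (fun _ _ => mem_univ _)
      continuousOn_const (fun τ _ => by simpa using hasDerivWithinAt_const τ (Iic τ) (0 : E))
      (fun _ _ => mem_univ _) hft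
  exact ha (hzero (left_mem_Icc.2 ht.1))

theorem pos_of_hasDerivWithinAt_mul_self {f c : ℝ → ℝ} {a b : ℝ}
    (hc : ContinuousOn c (Ico a b))
    (hf : ∀ t ∈ Ico a b, HasDerivWithinAt f (c t * f t) (Ico a b) t) (ha : 0 < f a) :
    ∀ t ∈ Ico a b, 0 < f t := by
  intro t ht
  by_contra! hft
  obtain ⟨s, hs, hfs⟩ := intermediate_value_Icc' ht.1
    ((HasDerivWithinAt.continuousOn hf).mono (Icc_subset_Ico_right ht.2)) ⟨hft, ha.le⟩
  exact ne_zero_of_hasDerivWithinAt_smul_self hc hf ha.ne' s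
    (Icc_subset_Ico_right ht.2 hs) hfs

theorem three_species_simultaneous_exhaustion
    (q r : ℝ) (hq : 0 < q) (hr : 0 < r)
    (b : ℝ) (u₁ u₂ u₃ M : ℝ → ℝ)
    (hM : ∀ t, M t = 4 * u₂ t ^ 2 + 6 * u₁ t * u₃ t + 12 * u₂ t * u₃ t
      + 9 * u₃ t ^ 2)
    (hMpos : ∀ t ∈ Set.Ico (0 : ℝ) b, 0 < M t)
    (hode₁ : ∀ t ∈ Set.Ico (0 : ℝ) b,
      HasDerivWithinAt u₁ (4 * u₂ t ^ 2 / M t) (Set.Ico 0 b) t)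
    (hode₂ : ∀ t ∈ Set.Ico (0 : ℝ) b,
      HasDerivWithinAt u₂ (-(8 * u₂ t ^ 2) / M t) (Set.Ico 0 b) t)
    (hode₃ : ∀ t ∈ Set.Ico (0 : ℝ) b,
      HasDerivWithinAt u₃
        (-(6 * u₁ t * u₃ t + 12 * u₂ t * u₃ t + 9 * u₃ t ^ 2) / M t)
        (Set.Ico 0 b) t)
    (hinit₂ : u₂ 0 = q) (hinit₃ : u₃ 0 = r) :
    ∀ t ∈ Set.Ico (0 : ℝ) b, 0 < u₂ t ∧ 0 < u₃ t := by
  have hu₁ := HasDerivWithinAt.continuousOn hode₁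
  have hu₂ := HasDerivWithinAt.continuousOn hode₂
  have hu₃ := HasDerivWithinAt.continuousOn hode₃
  have hMcont : ContinuousOn M (Ico 0 b) := by
    rw [show M = _ from funext hM]
    fun_prop
  have hMne : ∀ t ∈ Ico (0 : ℝ) b, M t ≠ 0 := fun t ht => (hMpos t ht).ne'
  have hpos₂ := pos_of_hasDerivWithinAt_mul_self (c := fun t => -8 * u₂ t / M t)
    ((by fun_prop : ContinuousOn (fun t => -8 * u₂ t) _).div hMcont hMne)
    (fun t ht => (hode₂ t ht).congr_deriv (by ring)) (hinit₂ ▸ hq)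
  have hpos₃ := pos_of_hasDerivWithinAt_mul_self
    (c := fun t => -(6 * u₁ t + 12 * u₂ t + 9 * u₃ t) / M t)
    ((by fun_prop : ContinuousOn (fun t => -(6 * u₁ t + 12 * u₂ t + 9 * u₃ t)) _).div
      hMcont hMne)
    (fun t ht => (hode₃ t ht).congr_deriv (by ring)) (hinit₃ ▸ hr)
  exact fun t ht => ⟨hpos₂ t ht, hpos₃ t ht⟩
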